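/- arXiv:2303.00128 — 6 statements merged into one kernel-verified Lean document; each statement's English description precedes it below -/
import Mathlib

section
/- Let X, Z, Y₁, Y₂ be random variables with values in nonempty finite types, with joint probability mass function having full support. Assume (i) X is conditionally independent of Y₁ given Z, i.e. P(X = x | Z = z, Y₁ = y₁) = P(X = x | Z = z) for all x, z, y₁, and (ii) Y₁ and Y₂ are independent. Then for all x, z, y₁ the posterior satisfies the identification formula P(Z = z | X = x, Y₁ = y₁) = P(X = x | Z = z) · ( ∑_{y₂} P(Z = z | Y₁ = y₁, Y₂ = y₂) · P(Y₂ = y₂) ) · P(Y₁ = y₁) / P(X = x, Y₁ = y₁). (This is the probabilistic content of the paper's Eq. (5): under the collider model, the posterior p(z | x, do(y₁)) with controlled dependencies between generating variables is expressible via ordinary conditional distributions over the observables, adjusted by averaging over the remaining generating factors.) -/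
open Finset

private lemma sum_pos' {α : Type*} [Fintype α] [Nonempty α] {g : α → ℝ}
    (hg : ∀ i, 0 < g i) : 0 < ∑ i, g i :=
  Finset.sum_pos (fun i _ => hg i) Finset.univ_nonempty

/-- For a full-support joint pmf over `(X, Z, Y₁, Y₂)` with
(i) `X ⟂ Y₁ | Z` and (ii) `Y₁ ⟂ Y₂`, the posterior satisfies the
identification formula
`P(Z = z | X = x, Y₁ = y₁)
  = P(X = x | Z = z) · (∑_{y₂} P(Z = z | Y₁ = y₁, Y₂ = y₂) · P(Y₂ = y₂))
      · P(Y₁ = y₁) / P(X = x, Y₁ = y₁)`. -/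
theorem stmt_4
    {SX SZ S1 S2 : Type*}
    [Fintype SX] [Fintype SZ] [Fintype S1] [Fintype S2]
    [Nonempty SX] [Nonempty SZ] [Nonempty S1] [Nonempty S2]
    (p : SX → SZ → S1 → S2 → ℝ)
    (hpos : ∀ a z b c, 0 < p a z b c)
    (hsum : ∑ a, ∑ z, ∑ b, ∑ c, p a z b c = 1)
    -- (i) X is conditionally independent of Y₁ given Z:
    -- P(X = x | Z = z, Y₁ = y₁) = P(X = x | Z = z)
    (hci : ∀ x z b,
      (∑ c, p x z b c) / (∑ a, ∑ c, p a z b c)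
        = (∑ b', ∑ c, p x z b' c) / (∑ a, ∑ b', ∑ c, p a z b' c))
    -- (ii) Y₁ and Y₂ are independent:
    (hindep : ∀ b c,
      (∑ a, ∑ z, p a z b c)
        = (∑ a, ∑ z, ∑ c', p a z b c') * (∑ a, ∑ z, ∑ b', p a z b' c)) :
    ∀ x z b,
      -- P(Z = z | X = x, Y₁ = y₁)
      (∑ c, p x z b c) / (∑ z', ∑ c, p x z' b c)
        = -- P(X = x | Z = z)
          ((∑ b', ∑ c, p x z b' c) / (∑ a, ∑ b', ∑ c, p a z b' c))
          -- ∑_{y₂} P(Z = z | Y₁ = y₁, Y₂ = y₂) · P(Y₂ = y₂)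
          * (∑ c, ((∑ a, p a z b c) / (∑ a, ∑ z', p a z' b c))
                * (∑ a, ∑ z', ∑ b', p a z' b' c))
          -- P(Y₁ = y₁)
          * (∑ a, ∑ z', ∑ c, p a z' b c)
          -- / P(X = x, Y₁ = y₁)
          / (∑ z', ∑ c, p x z' b c) := by
  intro x z b
  have hPc : ∀ c : S2, 0 < ∑ a, ∑ z', ∑ b', p a z' b' c := fun c =>
    sum_pos' fun a => sum_pos' fun z' => sum_pos' fun b' => hpos a z' b' c
  have hPb : 0 < ∑ a, ∑ z', ∑ c, p a z' b c :=
    sum_pos' fun a => sum_pos' fun z' => sum_pos' fun c => hpos a z' b c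
  have hPzb : 0 < ∑ a, ∑ c, p a z b c :=
    sum_pos' fun a => sum_pos' fun c => hpos a z b c
  have hD : 0 < ∑ z', ∑ c, p x z' b c :=
    sum_pos' fun z' => sum_pos' fun c => hpos x z' b c
  have hS : (∑ c, ((∑ a, p a z b c) / (∑ a, ∑ z', p a z' b c))
                * (∑ a, ∑ z', ∑ b', p a z' b' c))
      = (∑ a, ∑ c, p a z b c) / (∑ a, ∑ z', ∑ c, p a z' b c) := by
    rw [Finset.sum_comm, Finset.sum_div]
    refine Finset.sum_congr rfl fun c _ => ?_
    rw [hindep b c]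
    have hc := (hPc c).ne'
    field_simp
  rw [hS, ← hci x z b]
  field_simp
end

section
/- Let X, Z, Y₁, Y₂ be random variables with values in nonempty finite types, with joint probability mass function having full support, such that (i) X is conditionally independent of Y₁ given Z and (ii) Y₁ and Y₂ are independent. Fix values x and y₁, define the adjusted prior m(z) = ∑_{y₂} P(Z = z | Y₁ = y₁, Y₂ = y₂) · P(Y₂ = y₂) and the posterior π(z) = P(Z = z | X = x, Y₁ = y₁), and let q be any probability mass function on the value type of Z with full support. Then the exact evidence decomposition holds: log P(X = x | Y₁ = y₁) = ∑_z q(z) · log P(X = x | Z = z) − D(q ‖ m) + D(q ‖ π), where D(q ‖ r) = ∑_z q(z) · log( q(z)/r(z) ). (This is the exact form of the paper's reformulated evidence lower bound in Eq. (6), with ReI regularizer D(q ‖ m).) -/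
open Finset

/-- For a full-support joint pmf over `(X, Z, Y₁, Y₂)` with
(i) `X ⟂ Y₁ | Z` and (ii) `Y₁ ⟂ Y₂`, fixing `x, y₁`, setting
`m(z) = ∑_{y₂} P(Z = z | Y₁ = y₁, Y₂ = y₂) · P(Y₂ = y₂)` and
`π(z) = P(Z = z | X = x, Y₁ = y₁)`, for every full-support pmf `q` on the
values of `Z` the exact evidence decomposition holds:
`log P(X = x | Y₁ = y₁)
   = ∑_z q(z) · log P(X = x | Z = z) − D(q ‖ m) + D(q ‖ π)`. -/
theorem stmt_5
    {SX SZ S1 S2 : Type*}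
    [Fintype SX] [Fintype SZ] [Fintype S1] [Fintype S2]
    [Nonempty SX] [Nonempty SZ] [Nonempty S1] [Nonempty S2]
    (p : SX → SZ → S1 → S2 → ℝ)
    (hpos : ∀ a z b c, 0 < p a z b c)
    (hsum : ∑ a, ∑ z, ∑ b, ∑ c, p a z b c = 1)
    -- (i) X is conditionally independent of Y₁ given Z
    (hci : ∀ x z b,
      (∑ c, p x z b c) / (∑ a, ∑ c, p a z b c)
        = (∑ b', ∑ c, p x z b' c) / (∑ a, ∑ b', ∑ c, p a z b' c))
    -- (ii) Y₁ and Y₂ are independent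
    (hindep : ∀ b c,
      (∑ a, ∑ z, p a z b c)
        = (∑ a, ∑ z, ∑ c', p a z b c') * (∑ a, ∑ z, ∑ b', p a z b' c))
    -- fixed values x and y₁
    (x : SX) (y₁ : S1)
    -- the adjusted prior m(z) = ∑_{y₂} P(Z = z | Y₁ = y₁, Y₂ = y₂) · P(Y₂ = y₂)
    (m : SZ → ℝ)
    (hm : ∀ z, m z = ∑ c, ((∑ a, p a z y₁ c) / (∑ a, ∑ z', p a z' y₁ c))
          * (∑ a, ∑ z', ∑ b', p a z' b' c))
    -- the posterior π(z) = P(Z = z | X = x, Y₁ = y₁)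
    (π : SZ → ℝ)
    (hπ : ∀ z, π z = (∑ c, p x z y₁ c) / (∑ z', ∑ c, p x z' y₁ c))
    -- q : any full-support pmf on the value type of Z
    (q : SZ → ℝ) (hq_pos : ∀ z, 0 < q z) (hq_sum : ∑ z, q z = 1) :
    -- log P(X = x | Y₁ = y₁)
    Real.log ((∑ z, ∑ c, p x z y₁ c) / (∑ a, ∑ z, ∑ c, p a z y₁ c))
      = -- ∑_z q(z) · log P(X = x | Z = z)
        (∑ z, q z * Real.log ((∑ b', ∑ c, p x z b' c) / (∑ a, ∑ b', ∑ c, p a z b' c)))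
        -- − D(q ‖ m)
        - (∑ z, q z * Real.log (q z / m z))
        -- + D(q ‖ π)
        + (∑ z, q z * Real.log (q z / π z)) := by
  have uZ : (Finset.univ : Finset SZ).Nonempty := Finset.univ_nonempty
  have uX : (Finset.univ : Finset SX).Nonempty := Finset.univ_nonempty
  have u2 : (Finset.univ : Finset S2).Nonempty := Finset.univ_nonempty
  have u1 : (Finset.univ : Finset S1).Nonempty := Finset.univ_nonempty
  set A := ∑ z, ∑ c, p x z y₁ c with hA
  set B := ∑ a, ∑ z, ∑ c, p a z y₁ c with hB
  have posA : 0 < A :=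
    Finset.sum_pos (fun z _ => Finset.sum_pos (fun c _ => hpos x z y₁ c) u2) uZ
  have posB : 0 < B :=
    Finset.sum_pos (fun a _ =>
      Finset.sum_pos (fun z _ => Finset.sum_pos (fun c _ => hpos a z y₁ c) u2) uZ) uX
  have posf : ∀ z, 0 < ∑ c, p x z y₁ c := fun z =>
    Finset.sum_pos (fun c _ => hpos x z y₁ c) u2
  have posG : ∀ z, 0 < ∑ a, ∑ c, p a z y₁ c := fun z =>
    Finset.sum_pos (fun a _ => Finset.sum_pos (fun c _ => hpos a z y₁ c) u2) uX
  have posw : ∀ c, 0 < ∑ a, ∑ z', ∑ b', p a z' b' c := fun c =>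
    Finset.sum_pos (fun a _ => Finset.sum_pos (fun z _ =>
      Finset.sum_pos (fun b _ => hpos a z b c) u1) uZ) uX
  -- m z = G z / B
  have hm' : ∀ z, m z = (∑ a, ∑ c, p a z y₁ c) / B := by
    intro z
    rw [hm z]
    have step : ∀ c : S2, ((∑ a, p a z y₁ c) / (∑ a, ∑ z', p a z' y₁ c))
          * (∑ a, ∑ z', ∑ b', p a z' b' c) = (∑ a, p a z y₁ c) / B := by
      intro c
      rw [hindep y₁ c]
      have hw := ne_of_gt (posw c)
      have hBne := ne_of_gt posB
      rw [show (∑ a, ∑ z', ∑ c', p a z' y₁ c') = B from rfl]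
      field_simp
    rw [Finset.sum_congr rfl (fun c _ => step c), ← Finset.sum_div, Finset.sum_comm]
  rw [← Finset.sum_sub_distrib, ← Finset.sum_add_distrib]
  have key : ∀ z ∈ (Finset.univ : Finset SZ),
      q z * Real.log ((∑ b', ∑ c, p x z b' c) / (∑ a, ∑ b', ∑ c, p a z b' c))
        - q z * Real.log (q z / m z) + q z * Real.log (q z / π z)
      = q z * Real.log (A / B) := by
    intro z _
    rw [← hci x z y₁, hm' z, hπ z]
    have hfz := ne_of_gt (posf z)
    have hGz := ne_of_gt (posG z)
    have hqz := ne_of_gt (hq_pos z)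
    have hAne := ne_of_gt posA
    have hBne := ne_of_gt posB
    rw [Real.log_div hfz hGz,
        Real.log_div hqz (div_ne_zero hGz hBne),
        Real.log_div hqz (div_ne_zero hfz hAne),
        Real.log_div hGz hBne, Real.log_div hfz hAne,
        Real.log_div hAne hBne]
    ring
  rw [Finset.sum_congr rfl key, ← Finset.sum_mul, hq_sum, one_mul]
end

section
/- Let X, Z, Y₁, Y₂ be random variables with values in nonempty finite types, with joint probability mass function having full support, such that (i) X is conditionally independent of Y₁ given Z and (ii) Y₁ and Y₂ are independent. Fix values x and y₁, define m(z) = ∑_{y₂} P(Z = z | Y₁ = y₁, Y₂ = y₂) · P(Y₂ = y₂), and let q be any probability mass function on the value type of Z with full support. Then the evidence lower bound holds: log P(X = x | Y₁ = y₁) ≥ ∑_z q(z) · log P(X = x | Z = z) − D(q ‖ m), with equality if and only if q(z) = P(Z = z | X = x, Y₁ = y₁) for all z. (This is the paper's ELBO with ReI regularization, Eq. (6), imposing disentanglement constraints through causal identification on the KL regularizer term.) -/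
open Finset

private lemma gibbs_aux {ι : Type*} [Fintype ι] (q r : ι → ℝ)
    (hq : ∀ z, 0 < q z) (hr : ∀ z, 0 < r z)
    (hqs : ∑ z, q z = 1) (hrs : ∑ z, r z = 1) :
    0 ≤ ∑ z, q z * Real.log (q z / r z) ∧
    ((∑ z, q z * Real.log (q z / r z)) = 0 ↔ ∀ z, q z = r z) := by
  have hterm : ∀ z, q z * Real.log (r z / q z) ≤ r z - q z := by
    intro z
    have h1 : Real.log (r z / q z) ≤ r z / q z - 1 :=
      Real.log_le_sub_one_of_pos (div_pos (hr z) (hq z))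
    calc q z * Real.log (r z / q z) ≤ q z * (r z / q z - 1) :=
          mul_le_mul_of_nonneg_left h1 (hq z).le
      _ = r z - q z := by rw [mul_sub, mul_one, mul_comm, div_mul_cancel₀ _ (hq z).ne']
  have hneg : ∀ z, q z * Real.log (q z / r z) = -(q z * Real.log (r z / q z)) := by
    intro z
    rw [Real.log_div (hq z).ne' (hr z).ne', Real.log_div (hr z).ne' (hq z).ne']
    ring
  have hflip : ∑ z, q z * Real.log (q z / r z) = -∑ z, q z * Real.log (r z / q z) := by
    rw [← Finset.sum_neg_distrib]
    exact Finset.sum_congr rfl fun z _ => hneg z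
  have hsumle : ∑ z, q z * Real.log (r z / q z) ≤ 0 := by
    calc ∑ z, q z * Real.log (r z / q z) ≤ ∑ z, (r z - q z) :=
          Finset.sum_le_sum (fun z _ => hterm z)
      _ = 0 := by rw [Finset.sum_sub_distrib, hqs, hrs]; ring
  refine ⟨by rw [hflip]; linarith, ?_, ?_⟩
  · intro h0 z
    by_contra hne
    have hne1 : r z / q z ≠ 1 := by
      intro h
      exact hne ((div_eq_one_iff_eq (hq z).ne').1 h).symm
    have hstrict : q z * Real.log (r z / q z) < r z - q z := by
      have hlog := Real.log_lt_sub_one_of_pos (div_pos (hr z) (hq z)) hne1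
      calc q z * Real.log (r z / q z) < q z * (r z / q z - 1) :=
            (mul_lt_mul_iff_right₀ (hq z)).2 hlog
        _ = r z - q z := by rw [mul_sub, mul_one, mul_comm, div_mul_cancel₀ _ (hq z).ne']
    have hlt : ∑ z, q z * Real.log (r z / q z) < ∑ z, (r z - q z) :=
      Finset.sum_lt_sum (fun i _ => hterm i) ⟨z, Finset.mem_univ z, hstrict⟩
    rw [Finset.sum_sub_distrib, hqs, hrs] at hlt
    rw [hflip] at h0
    have : ∑ z, q z * Real.log (r z / q z) = 0 := by linarith
    linarith
  · intro h
    refine Finset.sum_eq_zero fun z _ => ?_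
    rw [h z, div_self (hr z).ne', Real.log_one, mul_zero]

/-- For a full-support joint pmf over `(X, Z, Y₁, Y₂)` with
(i) `X ⟂ Y₁ | Z` and (ii) `Y₁ ⟂ Y₂`, fixing `x, y₁` and setting
`m(z) = ∑_{y₂} P(Z = z | Y₁ = y₁, Y₂ = y₂) · P(Y₂ = y₂)`, for every
full-support pmf `q` on the values of `Z` the evidence lower bound holds:
`log P(X = x | Y₁ = y₁) ≥ ∑_z q(z) · log P(X = x | Z = z) − D(q ‖ m)`,
with equality iff `q(z) = P(Z = z | X = x, Y₁ = y₁)` for all `z`. -/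
theorem stmt_6
    {SX SZ S1 S2 : Type*}
    [Fintype SX] [Fintype SZ] [Fintype S1] [Fintype S2]
    [Nonempty SX] [Nonempty SZ] [Nonempty S1] [Nonempty S2]
    (p : SX → SZ → S1 → S2 → ℝ)
    (hpos : ∀ a z b c, 0 < p a z b c)
    (hsum : ∑ a, ∑ z, ∑ b, ∑ c, p a z b c = 1)
    -- (i) X is conditionally independent of Y₁ given Z
    (hci : ∀ x z b,
      (∑ c, p x z b c) / (∑ a, ∑ c, p a z b c)
        = (∑ b', ∑ c, p x z b' c) / (∑ a, ∑ b', ∑ c, p a z b' c))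
    -- (ii) Y₁ and Y₂ are independent
    (hindep : ∀ b c,
      (∑ a, ∑ z, p a z b c)
        = (∑ a, ∑ z, ∑ c', p a z b c') * (∑ a, ∑ z, ∑ b', p a z b' c))
    -- fixed values x and y₁
    (x : SX) (y₁ : S1)
    -- the adjusted prior m(z) = ∑_{y₂} P(Z = z | Y₁ = y₁, Y₂ = y₂) · P(Y₂ = y₂)
    (m : SZ → ℝ)
    (hm : ∀ z, m z = ∑ c, ((∑ a, p a z y₁ c) / (∑ a, ∑ z', p a z' y₁ c))
          * (∑ a, ∑ z', ∑ b', p a z' b' c))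
    -- q : any full-support pmf on the value type of Z
    (q : SZ → ℝ) (hq_pos : ∀ z, 0 < q z) (hq_sum : ∑ z, q z = 1) :
    -- the ELBO:  log P(X = x | Y₁ = y₁) ≥ likelihood term − D(q ‖ m)
    Real.log ((∑ z, ∑ c, p x z y₁ c) / (∑ a, ∑ z, ∑ c, p a z y₁ c))
      ≥ (∑ z, q z * Real.log ((∑ b', ∑ c, p x z b' c) / (∑ a, ∑ b', ∑ c, p a z b' c)))
        - (∑ z, q z * Real.log (q z / m z)) ∧
    -- with equality iff q is the posterior P(Z = z | X = x, Y₁ = y₁)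
    (Real.log ((∑ z, ∑ c, p x z y₁ c) / (∑ a, ∑ z, ∑ c, p a z y₁ c))
        = (∑ z, q z * Real.log ((∑ b', ∑ c, p x z b' c) / (∑ a, ∑ b', ∑ c, p a z b' c)))
          - (∑ z, q z * Real.log (q z / m z))
      ↔ ∀ z, q z = (∑ c, p x z y₁ c) / (∑ z', ∑ c, p x z' y₁ c)) := by
  have hXne : (Finset.univ : Finset SX).Nonempty := Finset.univ_nonempty
  have hZne : (Finset.univ : Finset SZ).Nonempty := Finset.univ_nonempty
  have hBne : (Finset.univ : Finset S1).Nonempty := Finset.univ_nonempty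
  have hCne : (Finset.univ : Finset S2).Nonempty := Finset.univ_nonempty
  -- positivity facts
  have hA : ∀ z, 0 < ∑ c, p x z y₁ c :=
    fun z => Finset.sum_pos (fun c _ => hpos _ _ _ _) hCne
  have hT : 0 < ∑ z, ∑ c, p x z y₁ c := Finset.sum_pos (fun z _ => hA z) hZne
  have hPzb : ∀ z, 0 < ∑ a, ∑ c, p a z y₁ c :=
    fun z => Finset.sum_pos (fun a _ => Finset.sum_pos (fun c _ => hpos _ _ _ _) hCne) hXne
  have hPb : 0 < ∑ a, ∑ z, ∑ c, p a z y₁ c :=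
    Finset.sum_pos (fun a _ => Finset.sum_pos (fun z _ =>
      Finset.sum_pos (fun c _ => hpos _ _ _ _) hCne) hZne) hXne
  -- m z equals P(Z = z | Y₁ = y₁)
  have hm' : ∀ z, m z = (∑ a, ∑ c, p a z y₁ c) / (∑ a, ∑ z, ∑ c, p a z y₁ c) := by
    intro z
    rw [hm]
    have hPbalt : (∑ a, ∑ z, ∑ c', p a z y₁ c') = ∑ a, ∑ z, ∑ c, p a z y₁ c := rfl
    have step : ∀ c : S2, ((∑ a, p a z y₁ c) / (∑ a, ∑ z', p a z' y₁ c))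
          * (∑ a, ∑ z', ∑ b', p a z' b' c)
        = (∑ a, p a z y₁ c) / (∑ a, ∑ z, ∑ c, p a z y₁ c) := by
      intro c
      have hPc : 0 < ∑ a, ∑ z', ∑ b', p a z' b' c :=
        Finset.sum_pos (fun a _ => Finset.sum_pos (fun z' _ =>
          Finset.sum_pos (fun b' _ => hpos _ _ _ _) hBne) hZne) hXne
      have hind := hindep y₁ c
      rw [hind]
      field_simp
    rw [Finset.sum_congr rfl fun c _ => step c, ← Finset.sum_div, Finset.sum_comm]
  -- pointwise key identity
  have key : ∀ z,
      Real.log ((∑ b', ∑ c, p x z b' c) / (∑ a, ∑ b', ∑ c, p a z b' c))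
        - Real.log (q z / m z)
      = Real.log ((∑ z, ∑ c, p x z y₁ c) / (∑ a, ∑ z, ∑ c, p a z y₁ c))
        - Real.log (q z / ((∑ c, p x z y₁ c) / (∑ z, ∑ c, p x z y₁ c))) := by
    intro z
    rw [← hci x z y₁, hm']
    rw [div_div_eq_mul_div, div_div_eq_mul_div]
    rw [Real.log_div (hA z).ne' (hPzb z).ne',
        Real.log_div (mul_pos (hq_pos z) hPb).ne' (hPzb z).ne',
        Real.log_mul (hq_pos z).ne' hPb.ne',
        Real.log_div hT.ne' hPb.ne',
        Real.log_div (mul_pos (hq_pos z) hT).ne' (hA z).ne',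
        Real.log_mul (hq_pos z).ne' hT.ne']
    ring
  -- rewrite the RHS of the goal
  have hrhs : (∑ z, q z * Real.log ((∑ b', ∑ c, p x z b' c) / (∑ a, ∑ b', ∑ c, p a z b' c)))
        - (∑ z, q z * Real.log (q z / m z))
      = Real.log ((∑ z, ∑ c, p x z y₁ c) / (∑ a, ∑ z, ∑ c, p a z y₁ c))
        - ∑ z, q z * Real.log (q z / ((∑ c, p x z y₁ c) / (∑ z, ∑ c, p x z y₁ c))) := by
    rw [← Finset.sum_sub_distrib]
    have : ∀ z ∈ Finset.univ,
        q z * Real.log ((∑ b', ∑ c, p x z b' c) / (∑ a, ∑ b', ∑ c, p a z b' c))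
          - q z * Real.log (q z / m z)
        = q z * Real.log ((∑ z, ∑ c, p x z y₁ c) / (∑ a, ∑ z, ∑ c, p a z y₁ c))
          - q z * Real.log (q z / ((∑ c, p x z y₁ c) / (∑ z, ∑ c, p x z y₁ c))) := by
      intro z _
      rw [← mul_sub, ← mul_sub, key z]
    rw [Finset.sum_congr rfl this, Finset.sum_sub_distrib, ← Finset.sum_mul, hq_sum, one_mul]
  -- Gibbs' inequality with the posterior
  have hr_pos : ∀ z, 0 < (∑ c, p x z y₁ c) / (∑ z, ∑ c, p x z y₁ c) :=
    fun z => div_pos (hA z) hT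
  have hr_sum : ∑ z, (∑ c, p x z y₁ c) / (∑ z', ∑ c, p x z' y₁ c) = 1 := by
    rw [← Finset.sum_div, div_self hT.ne']
  obtain ⟨hD, hDiff⟩ := gibbs_aux q
    (fun z => (∑ c, p x z y₁ c) / (∑ z', ∑ c, p x z' y₁ c)) hq_pos hr_pos hq_sum hr_sum
  rw [hrhs]
  constructor
  · linarith
  · constructor
    · intro h
      exact hDiff.1 (by linarith)
    · intro h
      have := hDiff.2 h
      linarith
end

section
/- Let S_X, S_M, S_Y be nonempty finite types and let p be a probability mass function on S_X × S_M × S_Y that factorizes according to the chain X → M → Y, i.e. p(x, m, y) = g(x) · k(m, x) · l(y, m), where g is a probability mass function on S_X, for each x the function m ↦ k(m, x) is a probability mass function on S_M, and for each m the function y ↦ l(y, m) is a probability mass function on S_Y. Then X and Y are conditionally independent given M: for every m with P(M = m) > 0 and all x, y, P(X = x ∧ Y = y | M = m) = P(X = x | M = m) · P(Y = y | M = m). (This instantiates the first blocking condition of the d-separation criterion — a node m on a chain path X → m → Y, included in the conditioning set Z, blocks the path — for every distribution compatible with the chain DAG.) -/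
open Finset

/-- If `p` on `S_X × S_M × S_Y` factorizes according to the chain
`X → M → Y`, i.e. `p(x, m, y) = g(x) · k(m, x) · l(y, m)` with the stated pmf
conditions, then `X` and `Y` are conditionally independent given `M`: for every
`m` with `P(M = m) > 0` and all `x, y`,
`P(X = x ∧ Y = y | M = m) = P(X = x | M = m) · P(Y = y | M = m)`. -/
theorem stmt_8
    {SX SM SY : Type*} [Fintype SX] [Fintype SM] [Fintype SY]
    [Nonempty SX] [Nonempty SM] [Nonempty SY]
    (p : SX → SM → SY → ℝ)
    (g : SX → ℝ) (k : SM → SX → ℝ) (l : SY → SM → ℝ)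
    (hfac : ∀ x m y, p x m y = g x * k m x * l y m)
    (hg_nn : ∀ x, 0 ≤ g x) (hg_sum : ∑ x, g x = 1)
    (hk_nn : ∀ m x, 0 ≤ k m x) (hk_sum : ∀ x, ∑ m, k m x = 1)
    (hl_nn : ∀ y m, 0 ≤ l y m) (hl_sum : ∀ m, ∑ y, l y m = 1) :
    ∀ m : SM, (0 < ∑ x, ∑ y, p x m y) →
      ∀ (x : SX) (y : SY),
        p x m y / (∑ x', ∑ y', p x' m y')
          = ((∑ y', p x m y') / (∑ x', ∑ y', p x' m y'))
            * ((∑ x', p x' m y) / (∑ x', ∑ y', p x' m y')) := by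

  intro m hm x y
  set A : ℝ := ∑ x', g x' * k m x' with hA
  have hrow : ∀ x', ∑ y', p x' m y' = g x' * k m x' := by
    intro x'
    simp only [hfac, ← Finset.mul_sum]
    rw [hl_sum m, mul_one]
  have hcol : ∀ y', ∑ x', p x' m y' = A * l y' m := by
    intro y'
    simp only [hfac, A]
    rw [Finset.sum_mul]
  have hdouble : (∑ x', ∑ y', p x' m y') = A := by
    simp only [hrow, A]
  have hApos : 0 < A := by rw [← hdouble]; exact hm
  rw [hdouble, hfac, hrow, hcol]
  field_simp
end

section
/- Let S_X, S₁, S₂, S_U be nonempty finite types. Fix a conditional kernel f (for each (y₁, y₂, u), x ↦ f(x, y₁, y₂, u) is a probability mass function on S_X) and strictly positive probability mass functions g₂ on S₂ and h on S_U. Let g₁ and g₁′ be any two strictly positive probability mass functions on S₁, and let p and p′ be the collider-Markov joint distributions p(x, y₁, y₂, u) = f(x, y₁, y₂, u) g₁(y₁) g₂(y₂) h(u) and p′(x, y₁, y₂, u) = f(x, y₁, y₂, u) g₁′(y₁) g₂(y₂) h(u). Then for all x and y₁ the adjustment formula is invariant across the two distributions: ∑_{(y₂,u)} P_p(X = x |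 Y₁ = y₁, Y₂ = y₂, U = u) · P_p(Y₂ = y₂, U = u) = ∑_{(y₂,u)} P_{p′}(X = x | Y₁ = y₁, Y₂ = y₂, U = u) · P_{p′}(Y₂ = y₂, U = u), and both sides equal ∑_{(y₂,u)} f(x, y₁, y₂, u) g₂(y₂) h(u). -/
open Finset

lemma adj_eq
    {SX S1 S2 SU : Type*}
    [Fintype SX] [Fintype S1] [Fintype S2] [Fintype SU]
    (f : SX → S1 → S2 → SU → ℝ)
    (hf_sum : ∀ b c d, ∑ a, f a b c d = 1)
    (g₂ : S2 → ℝ) (hg₂_pos : ∀ c, 0 < g₂ c)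
    (h : SU → ℝ) (hh_pos : ∀ d, 0 < h d)
    (g₁ : S1 → ℝ)
    (hg₁_pos : ∀ b, 0 < g₁ b) (hg₁_sum : ∑ b, g₁ b = 1)
    (p : SX → S1 → S2 → SU → ℝ)
    (hp : ∀ a b c d, p a b c d = f a b c d * g₁ b * g₂ c * h d)
    (x : SX) (y₁ : S1) :
    (∑ c, ∑ d, (p x y₁ c d / ∑ a, p a y₁ c d) * (∑ a, ∑ b, p a b c d))
      = ∑ c, ∑ d, f x y₁ c d * g₂ c * h d := by
  refine Finset.sum_congr rfl fun c _ => Finset.sum_congr rfl fun d _ => ?_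
  have h1 : (∑ a, p a y₁ c d) = g₁ y₁ * g₂ c * h d := by
    simp only [hp, ← Finset.sum_mul, hf_sum, one_mul]
  have h2 : (∑ a, ∑ b, p a b c d) = g₂ c * h d := by
    rw [Finset.sum_comm]
    have : ∀ b, (∑ a, p a b c d) = g₁ b * g₂ c * h d := fun b => by
      simp only [hp, ← Finset.sum_mul, hf_sum, one_mul]
    simp only [this, ← Finset.sum_mul, hg₁_sum, one_mul]
  rw [h1, h2, hp]
  have hne : g₁ y₁ * g₂ c * h d ≠ 0 :=
    ne_of_gt (mul_pos (mul_pos (hg₁_pos y₁) (hg₂_pos c)) (hh_pos d))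
  field_simp
  rw [div_eq_iff (hg₁_pos y₁).ne']
  ring

/-- For two collider-Markov joint distributions
`p(x, y₁, y₂, u) = f(x, y₁, y₂, u) g₁(y₁) g₂(y₂) h(u)` and
`p′(x, y₁, y₂, u) = f(x, y₁, y₂, u) g₁′(y₁) g₂(y₂) h(u)` sharing the kernel `f`
and strictly positive `g₂, h`, with `g₁, g₁′` any strictly positive pmfs, the
adjustment formula is invariant across the two distributions, and both sides
equal `∑_{(y₂,u)} f(x, y₁, y₂, u) g₂(y₂) h(u)`. -/
theorem stmt_11
    {SX S1 S2 SU : Type*}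
    [Fintype SX] [Fintype S1] [Fintype S2] [Fintype SU]
    [Nonempty SX] [Nonempty S1] [Nonempty S2] [Nonempty SU]
    (f : SX → S1 → S2 → SU → ℝ)
    (hf_nn : ∀ a b c d, 0 ≤ f a b c d)
    (hf_sum : ∀ b c d, ∑ a, f a b c d = 1)
    (g₂ : S2 → ℝ) (hg₂_pos : ∀ c, 0 < g₂ c) (hg₂_sum : ∑ c, g₂ c = 1)
    (h : SU → ℝ) (hh_pos : ∀ d, 0 < h d) (hh_sum : ∑ d, h d = 1)
    (g₁ g₁' : S1 → ℝ)
    (hg₁_pos : ∀ b, 0 < g₁ b) (hg₁_sum : ∑ b, g₁ b = 1)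
    (hg₁'_pos : ∀ b, 0 < g₁' b) (hg₁'_sum : ∑ b, g₁' b = 1)
    (p p' : SX → S1 → S2 → SU → ℝ)
    (hp : ∀ a b c d, p a b c d = f a b c d * g₁ b * g₂ c * h d)
    (hp' : ∀ a b c d, p' a b c d = f a b c d * g₁' b * g₂ c * h d) :
    ∀ (x : SX) (y₁ : S1),
      ((∑ c, ∑ d,
          (p x y₁ c d / ∑ a, p a y₁ c d) * (∑ a, ∑ b, p a b c d))
        = (∑ c, ∑ d,
          (p' x y₁ c d / ∑ a, p' a y₁ c d) * (∑ a, ∑ b, p' a b c d))) ∧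
      ((∑ c, ∑ d,
          (p x y₁ c d / ∑ a, p a y₁ c d) * (∑ a, ∑ b, p a b c d))
        = ∑ c, ∑ d, f x y₁ c d * g₂ c * h d) := by
  intro x y₁
  have e1 := adj_eq f hf_sum g₂ hg₂_pos h hh_pos g₁ hg₁_pos hg₁_sum p hp x y₁
  have e2 := adj_eq f hf_sum g₂ hg₂_pos h hh_pos g₁' hg₁'_pos hg₁'_sum p' hp' x y₁
  exact ⟨e1.trans e2.symm, e1⟩
end

section
/- Let S_X, S₁, S₂, S_U be nonempty finite types and let p be a probability mass function on S_X × S₁ × S₂ × S_U that factorizes according to the collider directed acyclic graph, p(x, y₁, y₂, u) = f(x, y₁, y₂, u) · g₁(y₁) · g₂(y₂) · h(u), where for each (y₁, y₂, u), x ↦ f(x, y₁, y₂, u) is a probability mass function on S_X and g₁, g₂, h are strictly positive probability mass functions. Then for all x and y₁ the interventional adjustment formula coincides with the ordinary conditional distribution: ∑_{(y₂,u)} P(X = x | Y₁ = y₁, Y₂ = y₂, U = u) · P(Y₂ = y₂, U = u) = P(X = x | Y₁ = y₁). (This is the paper's Eq. (2) specialized to distributions Markov-compatible with the collider DAG: the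 causal effect p(x | do(y₁)) is identifiable from the DAG and the observational distribution.) -/
open Finset

/-- For a joint pmf Markov-compatible with the collider DAG,
`p(x, y₁, y₂, u) = f(x, y₁, y₂, u) · g₁(y₁) · g₂(y₂) · h(u)` with strictly
positive `g₁, g₂, h`, the interventional adjustment formula coincides with the
ordinary conditional distribution:
`∑_{(y₂,u)} P(X = x | Y₁ = y₁, Y₂ = y₂, U = u) · P(Y₂ = y₂, U = u)
  = P(X = x | Y₁ = y₁)`. -/
theorem stmt_12
    {SX S1 S2 SU : Type*}
    [Fintype SX] [Fintype S1] [Fintype S2] [Fintype SU]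
    [Nonempty SX] [Nonempty S1] [Nonempty S2] [Nonempty SU]
    (p f : SX → S1 → S2 → SU → ℝ)
    (g₁ : S1 → ℝ) (g₂ : S2 → ℝ) (h : SU → ℝ)
    (hfac : ∀ a b c d, p a b c d = f a b c d * g₁ b * g₂ c * h d)
    (hf_nn : ∀ a b c d, 0 ≤ f a b c d)
    (hf_sum : ∀ b c d, ∑ a, f a b c d = 1)
    (hg₁_pos : ∀ b, 0 < g₁ b) (hg₁_sum : ∑ b, g₁ b = 1)
    (hg₂_pos : ∀ c, 0 < g₂ c) (hg₂_sum : ∑ c, g₂ c = 1)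
    (hh_pos : ∀ d, 0 < h d) (hh_sum : ∑ d, h d = 1) :
    ∀ (x : SX) (y₁ : S1),
      (∑ c, ∑ d,
          (p x y₁ c d / ∑ a, p a y₁ c d) * (∑ a, ∑ b, p a b c d))
        = (∑ c, ∑ d, p x y₁ c d) / (∑ a, ∑ c, ∑ d, p a y₁ c d) := by
  intro x y₁
  have hS1 : ∀ b c d, (∑ a, p a b c d) = g₁ b * g₂ c * h d := by
    intro b c d
    have : (∑ a, p a b c d) = (∑ a, f a b c d) * (g₁ b * g₂ c * h d) := by
      rw [Finset.sum_mul]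
      exact Finset.sum_congr rfl fun a _ => by rw [hfac]; ring
    rw [this, hf_sum, one_mul]
  have hS2 : ∀ c d, (∑ a, ∑ b, p a b c d) = g₂ c * h d := by
    intro c d
    rw [Finset.sum_comm]
    have : (∑ b, ∑ a, p a b c d) = (∑ b, g₁ b) * (g₂ c * h d) := by
      rw [Finset.sum_mul]
      exact Finset.sum_congr rfl fun b _ => by rw [hS1]; ring
    rw [this, hg₁_sum, one_mul]
  have hden : (∑ a, ∑ c, ∑ d, p a y₁ c d) = g₁ y₁ := by
    rw [Finset.sum_comm]
    have : (∑ c, ∑ a, ∑ d, p a y₁ c d) = ∑ c, g₂ c * (g₁ y₁ * (∑ d, h d)) := by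
      refine Finset.sum_congr rfl fun c _ => ?_
      rw [Finset.sum_comm]
      rw [Finset.mul_sum, Finset.mul_sum]
      exact Finset.sum_congr rfl fun d _ => by rw [hS1]; ring
    rw [this, hh_sum, ← Finset.sum_mul, hg₂_sum]
    ring
  have hne : ∀ c d, g₁ y₁ * g₂ c * h d ≠ 0 := fun c d =>
    mul_ne_zero (mul_ne_zero (hg₁_pos y₁).ne' (hg₂_pos c).ne') (hh_pos d).ne'
  have hterm : ∀ c d, (p x y₁ c d / ∑ a, p a y₁ c d) * (∑ a, ∑ b, p a b c d)
      = f x y₁ c d * (g₂ c * h d) := by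
    intro c d
    rw [hS1, hS2, hfac, div_mul_eq_mul_div, div_eq_iff (hne c d)]
    ring
  have hnum : (∑ c, ∑ d, p x y₁ c d) = g₁ y₁ * ∑ c, ∑ d, f x y₁ c d * (g₂ c * h d) := by
    rw [Finset.mul_sum]
    refine Finset.sum_congr rfl fun c _ => ?_
    rw [Finset.mul_sum]
    exact Finset.sum_congr rfl fun d _ => by rw [hfac]; ring
  simp only [hterm]
  rw [hnum, hden]
  exact (mul_div_cancel_left₀ _ (hg₁_pos y₁).ne').symm
end
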